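/- arXiv:2604.11436 — 2 statements merged into one kernel-verified Lean document; each statement's English description precedes it below -/
import Mathlib

section
/- Let ε > 0, r ≥ 0 and set c = r/√ε. Then the leading half-space coefficient of the local part of the 2D Poisson volume potential is given exactly by (1/(2√π)) ∫₀^ε t^{-1/2} (∫_{−r}^∞ e^{−s²/(4t)} ds) dt = ε · A₀(c), where A₀(c) = (1/2)·(1 + erf(c/2) + (c/√π)·e^{−c²/4} − (c²/2)·erfc(c/2)). -/
/-!
Rescaling the Gaussian gives `∫_{-r}^∞ e^{-s²/(4t)} ds = √(πt) (1 + erf (r / (2√t)))`, so the outer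
integrand is `√π (1 + erf (r / (2√t)))`. This has the explicit antiderivative
`t (1 + erf a) - (r²/2)(1 - erf a) + (r/√π) √t e^{-a²}` with `a = r / (2√t)`: differentiating,
the two Gaussian terms cancel. As `t → 0⁺` it tends to `0`, since `erf a → 1` when `r > 0`, so the
integral over `(0, ε]` is its value at `ε`, which is `2 ε A₀ (r / √ε)`.
-/

open MeasureTheory Real Set

/-- The error function `erf x = (2/√π) ∫₀^x e^{-s²} ds`. -/
noncomputable def erf (x : ℝ) : ℝ := (2 / Real.sqrt π) * ∫ s in (0 : ℝ)..x, Real.exp (-s ^ 2)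

/-- The complementary error function `erfc x = (2/√π) ∫_x^∞ e^{-s²} ds`. -/
noncomputable def erfc (x : ℝ) : ℝ := (2 / Real.sqrt π) * ∫ s in Set.Ioi x, Real.exp (-s ^ 2)

/-- The leading half-space coefficient of the local part of the 2D Poisson volume potential. -/
noncomputable def A₀ (c : ℝ) : ℝ :=
  (1 / 2) * (1 + erf (c / 2) + (c / Real.sqrt π) * Real.exp (-c ^ 2 / 4)
    - (c ^ 2 / 2) * erfc (c / 2))

open Filter Topology

lemma integrable_exp_neg_sq : Integrable fun s : ℝ => exp (-s ^ 2) := by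
  simpa using integrable_exp_neg_mul_sq one_pos

lemma integral_Ioi_zero_exp_neg_sq : ∫ s in Ioi (0 : ℝ), exp (-s ^ 2) = √π / 2 := by
  simpa using integral_gaussian_Ioi 1

lemma hasDerivAt_erf (x : ℝ) : HasDerivAt erf (2 / √π * exp (-x ^ 2)) x :=
  have hcont : Continuous fun s : ℝ => exp (-s ^ 2) := by fun_prop
  (intervalIntegral.integral_hasDerivAt_right (hcont.intervalIntegrable _ _)
    (hcont.stronglyMeasurableAtFilter _ _) hcont.continuousAt).const_mul _

lemma continuous_erf : Continuous erf :=
  continuous_iff_continuousAt.2 fun x => (hasDerivAt_erf x).continuousAt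

lemma erf_neg (x : ℝ) : erf (-x) = -erf x := by
  have h := intervalIntegral.integral_comp_neg (a := 0) (b := -x) fun s : ℝ => exp (-s ^ 2)
  simp only [even_two, Even.neg_pow, neg_zero, neg_neg] at h
  rw [erf, erf, h, intervalIntegral.integral_symm]
  ring

lemma erf_add_erfc (x : ℝ) : erf x + erfc x = 1 := by
  rw [erf, erfc, ← mul_add, intervalIntegral.integral_interval_add_Ioi'
    integrable_exp_neg_sq.intervalIntegrable integrable_exp_neg_sq.integrableOn,
    integral_Ioi_zero_exp_neg_sq]
  field_simp

lemma erfc_nonneg (x : ℝ) : 0 ≤ erfc x :=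
  mul_nonneg (by positivity) (setIntegral_nonneg measurableSet_Ioi fun _ _ => (exp_pos _).le)

lemma erf_le_one (x : ℝ) : erf x ≤ 1 := by
  linarith [erf_add_erfc x, erfc_nonneg x]

lemma abs_erf_le_one (x : ℝ) : |erf x| ≤ 1 :=
  abs_le.2 ⟨by linarith [erf_neg x, erf_le_one (-x)], erf_le_one x⟩

lemma norm_one_add_erf_le (x : ℝ) : ‖1 + erf x‖ ≤ 2 := by
  rw [norm_eq_abs]
  linarith [abs_add_le 1 (erf x), abs_erf_le_one x, abs_one (α := ℝ)]

lemma tendsto_erf_atTop : Tendsto erf atTop (𝓝 1) := by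
  have h := (intervalIntegral_tendsto_integral_Ioi 0 integrable_exp_neg_sq.integrableOn
    tendsto_id).const_mul (2 / √π)
  rw [integral_Ioi_zero_exp_neg_sq, div_mul_div_cancel₀ (by positivity), div_self two_ne_zero] at h
  exact h

lemma exp_neg_sq_div_eq {t : ℝ} (ht : 0 < t) (s : ℝ) :
    exp (-s ^ 2 / (4 * t)) = exp (-(s / (2 * √t)) ^ 2) := by
  rw [div_pow, mul_pow, sq_sqrt ht.le]
  ring_nf

lemma integrable_exp_neg_sq_div {t : ℝ} (ht : 0 < t) :
    Integrable fun s : ℝ => exp (-s ^ 2 / (4 * t)) := by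
  simpa [exp_neg_sq_div_eq ht] using
    integrable_exp_neg_sq.comp_div (by positivity : 2 * √t ≠ 0)

lemma integral_exp_neg_sq_div {t : ℝ} (ht : 0 < t) (x : ℝ) :
    ∫ s in 0..x, exp (-s ^ 2 / (4 * t)) = √π * √t * erf (x / (2 * √t)) := by
  simp_rw [exp_neg_sq_div_eq ht]
  rw [intervalIntegral.integral_comp_div (fun v => exp (-v ^ 2)) (by positivity), zero_div, erf,
    smul_eq_mul]
  field_simp

lemma integral_Ioi_zero_exp_neg_sq_div (t : ℝ) :
    ∫ s in Ioi 0, exp (-s ^ 2 / (4 * t)) = √π * √t := by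
  have h := integral_gaussian_Ioi (4 * t)⁻¹
  simp only [neg_mul, ← div_eq_inv_mul, div_inv_eq_mul, ← neg_div] at h
  rw [h, sqrt_mul pi_pos.le, sqrt_mul zero_le_four, show (4 : ℝ) = 2 ^ 2 by norm_num,
    sqrt_sq zero_le_two]
  ring

lemma integral_Ioi_neg_exp_neg_sq_div {t : ℝ} (ht : 0 < t) (r : ℝ) :
    ∫ s in Ioi (-r), exp (-s ^ 2 / (4 * t)) = √π * √t * (1 + erf (r / (2 * √t))) := by
  have hint := integrable_exp_neg_sq_div ht
  rw [← intervalIntegral.integral_interval_add_Ioi' hint.intervalIntegrable hint.integrableOn,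
    intervalIntegral.integral_symm,
    integral_exp_neg_sq_div ht, integral_Ioi_zero_exp_neg_sq_div t, neg_div, erf_neg]
  ring

noncomputable def onePlusErfPrimitive (r t : ℝ) : ℝ :=
  t * (1 + erf (r / (2 * √t))) - r ^ 2 / 2 * (1 - erf (r / (2 * √t)))
    + r / √π * √t * exp (-(r / (2 * √t)) ^ 2)

lemma hasDerivAt_div_two_sqrt (r : ℝ) {t : ℝ} (ht : 0 < t) :
    HasDerivAt (fun u => r / (2 * √u)) (-(r / (2 * √t)) / (2 * t)) t := by
  have h := ((hasDerivAt_sqrt ht.ne').const_mul 2).fun_inv (by positivity) |>.const_mul r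
  refine h.congr_deriv ?_
  obtain ⟨s, hs, rfl⟩ : ∃ s, 0 < s ∧ t = s ^ 2 := ⟨√t, sqrt_pos.2 ht, (sq_sqrt ht.le).symm⟩
  rw [sqrt_sq hs.le]
  field_simp

lemma hasDerivAt_onePlusErfPrimitive (r : ℝ) {t : ℝ} (ht : 0 < t) :
    HasDerivAt (onePlusErfPrimitive r) (1 + erf (r / (2 * √t))) t := by
  have ha := hasDerivAt_div_two_sqrt r ht
  have herf := (hasDerivAt_erf _).comp t ha
  have h := (((hasDerivAt_id t).mul (herf.const_add 1)).sub
    ((herf.const_sub 1).const_mul (r ^ 2 / 2))).add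
    (((hasDerivAt_sqrt ht.ne').const_mul (r / √π)).mul (ha.fun_pow 2).neg.exp)
  refine h.congr_deriv ?_
  obtain ⟨s, hs, rfl⟩ : ∃ s, 0 < s ∧ t = s ^ 2 := ⟨√t, sqrt_pos.2 ht, (sq_sqrt ht.le).symm⟩
  simp only [Function.comp_apply, id, Pi.neg_apply, sqrt_sq hs.le, Nat.reduceSub, pow_one,
    Nat.cast_ofNat]
  generalize exp (-(r / (2 * s)) ^ 2) = E
  field_simp [hs.ne']
  ring

lemma tendsto_div_two_sqrt_atTop {r : ℝ} (hr : 0 < r) :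
    Tendsto (fun t => r / (2 * √t)) (𝓝[>] 0) atTop := by
  have h := (tendsto_sqrt_atTop.comp tendsto_inv_nhdsGT_zero).const_mul_atTop (half_pos hr)
  refine h.congr fun t => ?_
  simp only [Function.comp_apply, sqrt_inv]
  ring

lemma tendsto_onePlusErfPrimitive_zero {r : ℝ} (hr : 0 ≤ r) :
    Tendsto (onePlusErfPrimitive r) (𝓝[>] 0) (𝓝 0) := by
  have hid : Tendsto (fun t : ℝ => t) (𝓝[>] 0) (𝓝 0) :=
    tendsto_nhdsWithin_of_tendsto_nhds tendsto_id
  have hsqrt : Tendsto (fun t : ℝ => r / √π * √t) (𝓝[>] 0) (𝓝 0) := by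
    simpa using ((continuous_sqrt.tendsto 0).mono_left nhdsWithin_le_nhds).const_mul (r / √π)
  have hlin : Tendsto (fun t => t * (1 + erf (r / (2 * √t)))) (𝓝[>] 0) (𝓝 0) :=
    hid.zero_mul_isBoundedUnder_le <| isBoundedUnder_of ⟨2, fun _ => norm_one_add_erf_le _⟩
  have hgauss : Tendsto (fun t => r / √π * √t * exp (-(r / (2 * √t)) ^ 2)) (𝓝[>] 0) (𝓝 0) :=
    hsqrt.zero_mul_isBoundedUnder_le <| isBoundedUnder_of ⟨1, fun t => by
      simp [Real.norm_eq_abs, abs_exp, sq_nonneg]⟩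
  have hcoef : Tendsto (fun t => r ^ 2 / 2 * (1 - erf (r / (2 * √t)))) (𝓝[>] 0) (𝓝 0) := by
    rcases hr.eq_or_lt with rfl | hr
    · simp
    · simpa using ((tendsto_erf_atTop.comp (tendsto_div_two_sqrt_atTop hr)).const_sub 1).const_mul
        (r ^ 2 / 2)
  have h := (hlin.sub hcoef).add hgauss
  rw [sub_zero, add_zero] at h
  exact h

lemma intervalIntegrable_one_add_erf_div_two_sqrt (r a b : ℝ) :
    IntervalIntegrable (fun t => 1 + erf (r / (2 * √t))) volume a b :=
  intervalIntegrable_iff.2 <| Measure.integrableOn_of_bounded measure_Ioc_lt_top.ne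
    ((continuous_erf.measurable.comp (measurable_const.div
      (measurable_const.mul continuous_sqrt.measurable))).const_add 1).aestronglyMeasurable
    (ae_of_all _ fun _ => norm_one_add_erf_le _)

lemma integral_one_add_erf_div_two_sqrt {r ε : ℝ} (hr : 0 ≤ r) (hε : 0 < ε) :
    ∫ t in 0..ε, (1 + erf (r / (2 * √t))) = onePlusErfPrimitive r ε := by
  rw [intervalIntegral.integral_eq_sub_of_hasDerivAt_of_tendsto hε
    (fun t ht => hasDerivAt_onePlusErfPrimitive r ht.1)
    (intervalIntegrable_one_add_erf_div_two_sqrt r 0 ε) (tendsto_onePlusErfPrimitive_zero hr)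
    ((hasDerivAt_onePlusErfPrimitive r hε).continuousAt.tendsto.mono_left nhdsWithin_le_nhds),
    sub_zero]

/-- The leading half-space contribution of the local part of the 2D Poisson volume potential
equals `ε · A₀(c)` with `c = r/√ε`. -/
theorem halfspace_leading_coefficient
    (ε : ℝ) (hε : 0 < ε) (r : ℝ) (hr : 0 ≤ r) (c : ℝ) (hc : c = r / Real.sqrt ε) :
    (1 / (2 * Real.sqrt π)) *
        ∫ t in Set.Ioc (0 : ℝ) ε,
          t ^ (-(1 : ℝ) / 2) * ∫ s in Set.Ioi (-r), Real.exp (-s ^ 2 / (4 * t))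
      = ε * A₀ c := by
  have hinner : ∀ t ∈ Ioc (0 : ℝ) ε,
      t ^ (-(1 : ℝ) / 2) * ∫ s in Ioi (-r), exp (-s ^ 2 / (4 * t))
        = √π * (1 + erf (r / (2 * √t))) := fun t ht => by
    have h : t ^ (-(1 : ℝ) / 2) * √t = 1 := by
      rw [sqrt_eq_rpow, ← rpow_add ht.1]
      norm_num
    rw [integral_Ioi_neg_exp_neg_sq_div ht.1]
    linear_combination √π * (1 + erf (r / (2 * √t))) * h
  have hsε : 0 < √ε := sqrt_pos.2 hε
  obtain rfl : r = c * √ε := by rw [hc, div_mul_cancel₀ _ hsε.ne']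
  have harg : c * √ε / (2 * √ε) = c / 2 := by field_simp
  rw [setIntegral_congr_fun measurableSet_Ioc hinner, integral_const_mul,
    ← intervalIntegral.integral_of_le hε.le, integral_one_add_erf_div_two_sqrt hr hε,
    onePlusErfPrimitive, A₀, harg, show -(c / 2) ^ 2 = -c ^ 2 / 4 by ring]
  have herfc := erf_add_erfc (c / 2)
  field_simp
  rw [sq_sqrt hε.le]
  linear_combination (c ^ 2 * ε * √π) * herfc
end

section
/- Let g : ℝ² → ℂ be a Schwartz function, ε > 0, and define ĝ(ξ) = ∫_{ℝ²} g(y) e^{−i ξ·y} dy. Then for every x ∈ ℝ², the Fourier-side representation of the local part equals its heat-kernel representation: (1/(2π)²) ∫_{ℝ²} ((1 − e^{−ε‖ξ‖²})/‖ξ‖²) · ĝ(ξ) · e^{i ξ·x} dξ = ∫₀^ε ∫_{ℝ²} (4πt)^{−1} · exp(−‖x − y‖²/(4t)) · g(y) dy dt, where the Fourier-side integrand is extended continuously by the value ε·ĝ(0)·e^{i·0} at ξ = 0 (the factor (1 − e^{−ε‖ξ‖²})/‖ξ‖² extends continuously to the value ε at ξ = 0). -/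
open MeasureTheory Real Set
open scoped Classical
open scoped RealInnerProductSpace FourierTransform

noncomputable section

lemma aux_time_integral_pos {ε r : ℝ} (hε : 0 ≤ ε) (hr : 0 < r) :
    ∫ t in Ioc (0:ℝ) ε, Real.exp (-t * r) = (1 - Real.exp (-ε * r)) / r := by
  rw [← intervalIntegral.integral_of_le hε]
  have hder : ∀ t : ℝ, HasDerivAt (fun s : ℝ => -(Real.exp (-s * r) / r))
      (Real.exp (-t * r)) t := by
    intro t
    have h1 : HasDerivAt (fun s : ℝ => -s * r) (-1 * r) t :=
      (hasDerivAt_id t).neg.mul_const r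
    have := ((h1.exp).div_const r).neg
    refine this.congr_deriv ?_
    field_simp
  rw [intervalIntegral.integral_eq_sub_of_hasDerivAt (fun t _ => hder t)
    ((Real.continuous_exp.comp (by continuity)).intervalIntegrable 0 ε)]
  field_simp
  simp only [mul_zero, neg_zero, Real.exp_zero]
  ring

lemma aux_time_integral_zero {ε : ℝ} (hε : 0 ≤ ε) :
    ∫ _t in Ioc (0:ℝ) ε, (1:ℝ) = ε := by
  simp [Real.volume_Ioc, hε]

lemma aux_gauss {t : ℝ} (ht : 0 < t) (w : EuclideanSpace ℝ (Fin 2)) :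
    ∫ ξ : EuclideanSpace ℝ (Fin 2),
        Complex.exp (-(t:ℂ) * ‖ξ‖^2 + Complex.I * (⟪w, ξ⟫ : ℝ)) =
      (π / (t:ℂ)) * Complex.exp (-(‖w‖^2 : ℂ) / (4 * t)) := by
  have hb : (0:ℝ) < ((t:ℂ)).re := by simpa using ht
  rw [GaussianFourier.integral_cexp_neg_mul_sq_norm_add hb Complex.I w]
  rw [finrank_euclideanSpace_fin]
  norm_num

lemma aux_gauss_integrable {t : ℝ} (ht : 0 < t) :
    Integrable (fun ξ : EuclideanSpace ℝ (Fin 2) => Real.exp (-t * ‖ξ‖^2)) := by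
  have hb : (0:ℝ) < ((t:ℂ)).re := by simpa using ht
  have h := (GaussianFourier.integrable_cexp_neg_mul_sq_norm_add hb 0
    (0 : EuclideanSpace ℝ (Fin 2))).norm
  refine h.congr (Filter.Eventually.of_forall fun ξ => ?_)
  simp [Complex.norm_exp, ← Complex.ofReal_pow]

/-- For Schwartz data `g` on `ℝ²`, the Fourier-side representation of the local part of the
parabolic splitting equals its heat-kernel representation.  At `ξ = 0` the Fourier-side
integrand is extended continuously by the value `ε·ĝ(0)` (the factor
`(1 − e^{−ε‖ξ‖²})/‖ξ‖²` extends continuously to `ε` at `ξ = 0`). -/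
theorem local_part_fourier_eq_heat
    (g : SchwartzMap (EuclideanSpace ℝ (Fin 2)) ℂ) (ε : ℝ) (hε : 0 < ε)
    (x : EuclideanSpace ℝ (Fin 2)) :
    (1 / (2 * π) ^ 2 : ℂ) *
        ∫ ξ : EuclideanSpace ℝ (Fin 2),
          (if ξ = 0 then
              (ε : ℂ) * ∫ y : EuclideanSpace ℝ (Fin 2), g y
            else
              (((1 - Real.exp (-ε * ‖ξ‖ ^ 2)) / ‖ξ‖ ^ 2 : ℝ) : ℂ) *
                (∫ y : EuclideanSpace ℝ (Fin 2),
                    g y * Complex.exp (-Complex.I * (⟪ξ, y⟫ : ℝ))) *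
                Complex.exp (Complex.I * (⟪ξ, x⟫ : ℝ)))
      = ∫ t in Set.Ioc (0 : ℝ) ε, ∫ y : EuclideanSpace ℝ (Fin 2),
          (((4 * π * t)⁻¹ * Real.exp (-‖x - y‖ ^ 2 / (4 * t)) : ℝ) : ℂ) * g y := by
  have h2pi : (2 * π : ℝ) ≠ 0 := by positivity
  -- the (non-normalized) Fourier transform of g
  have gh_eq : ∀ ξ : EuclideanSpace ℝ (Fin 2), (∫ y : EuclideanSpace ℝ (Fin 2), g y * Complex.exp (-Complex.I * (⟪ξ, y⟫ : ℝ)))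
      = (SchwartzMap.fourierTransformCLM ℂ g) ((2 * π)⁻¹ • ξ) := by
    intro ξ
    rw [SchwartzMap.fourierTransformCLM_apply, SchwartzMap.fourier_coe, Real.fourier_eq']
    refine integral_congr_ae (Filter.Eventually.of_forall fun y => ?_)
    simp only [smul_eq_mul, real_inner_smul_right]
    rw [mul_comm]
    congr 1
    rw [show (-2 * π * ((2 * π)⁻¹ * (⟪y, ξ⟫ : ℝ))) = -⟪y, ξ⟫ from by field_simp]
    push_cast
    rw [real_inner_comm y ξ]
    ring
  have gh_cont : Continuous fun ξ : EuclideanSpace ℝ (Fin 2) =>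
      (∫ y : EuclideanSpace ℝ (Fin 2), g y * Complex.exp (-Complex.I * (⟪ξ, y⟫ : ℝ))) := by
    simp only [gh_eq]
    exact (SchwartzMap.fourierTransformCLM ℂ g).continuous.comp
      (continuous_const_smul _)
  have gh_int : Integrable (fun ξ : EuclideanSpace ℝ (Fin 2) =>
      (∫ y : EuclideanSpace ℝ (Fin 2), g y * Complex.exp (-Complex.I * (⟪ξ, y⟫ : ℝ)))) := by
    have h := ((SchwartzMap.fourierTransformCLM ℂ g).integrable
      (μ := (volume : Measure (EuclideanSpace ℝ (Fin 2))))).comp_smul (R := (2 * π)⁻¹) (inv_ne_zero h2pi)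
    exact h.congr (Filter.Eventually.of_forall fun ξ => (gh_eq ξ).symm)
  -- time-sliced integrand
  have key : ∀ ξ : EuclideanSpace ℝ (Fin 2),
      (if ξ = 0 then
          (ε : ℂ) * ∫ y : EuclideanSpace ℝ (Fin 2), g y
        else
          (((1 - Real.exp (-ε * ‖ξ‖ ^ 2)) / ‖ξ‖ ^ 2 : ℝ) : ℂ) *
            (∫ y : EuclideanSpace ℝ (Fin 2), g y * Complex.exp (-Complex.I * (⟪ξ, y⟫ : ℝ))) *
            Complex.exp (Complex.I * (⟪ξ, x⟫ : ℝ)))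
      = ∫ t in Ioc (0:ℝ) ε, (Real.exp (-t * ‖ξ‖^2) : ℂ) *
          (∫ y : EuclideanSpace ℝ (Fin 2), g y * Complex.exp (-Complex.I * (⟪ξ, y⟫ : ℝ))) *
          Complex.exp (Complex.I * (⟪ξ, x⟫ : ℝ)) := by
    intro ξ
    have hrw : ∫ t in Ioc (0:ℝ) ε, (Real.exp (-t * ‖ξ‖^2) : ℂ) *
          (∫ y : EuclideanSpace ℝ (Fin 2), g y * Complex.exp (-Complex.I * (⟪ξ, y⟫ : ℝ))) *
          Complex.exp (Complex.I * (⟪ξ, x⟫ : ℝ))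
        = ((∫ t in Ioc (0:ℝ) ε, Real.exp (-t * ‖ξ‖^2) : ℝ) : ℂ) *
          (∫ y : EuclideanSpace ℝ (Fin 2), g y * Complex.exp (-Complex.I * (⟪ξ, y⟫ : ℝ))) *
          Complex.exp (Complex.I * (⟪ξ, x⟫ : ℝ)) := by
      simp_rw [mul_assoc]
      rw [integral_mul_const,
        show (∫ t in Ioc (0:ℝ) ε, (Real.exp (-t * ‖ξ‖^2) : ℂ))
          = ((∫ t in Ioc (0:ℝ) ε, Real.exp (-t * ‖ξ‖^2) : ℝ) : ℂ) from integral_ofReal]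
    rw [hrw]
    by_cases hξ : ξ = 0
    · simp [hξ, aux_time_integral_zero hε.le]
    · have hn : (0:ℝ) < ‖ξ‖^2 := by
        have := norm_pos_iff.2 hξ
        positivity
      rw [if_neg hξ, aux_time_integral_pos hε.le hn]
  calc (1 / (2 * π) ^ 2 : ℂ) *
        ∫ ξ : EuclideanSpace ℝ (Fin 2),
          (if ξ = 0 then
              (ε : ℂ) * ∫ y : EuclideanSpace ℝ (Fin 2), g y
            else
              (((1 - Real.exp (-ε * ‖ξ‖ ^ 2)) / ‖ξ‖ ^ 2 : ℝ) : ℂ) *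
                (∫ y : EuclideanSpace ℝ (Fin 2),
                    g y * Complex.exp (-Complex.I * (⟪ξ, y⟫ : ℝ))) *
                Complex.exp (Complex.I * (⟪ξ, x⟫ : ℝ)))
      = (1 / (2 * π) ^ 2 : ℂ) * ∫ ξ : EuclideanSpace ℝ (Fin 2), ∫ t in Ioc (0:ℝ) ε,
          (Real.exp (-t * ‖ξ‖^2) : ℂ) *
          (∫ y : EuclideanSpace ℝ (Fin 2), g y * Complex.exp (-Complex.I * (⟪ξ, y⟫ : ℝ))) *
          Complex.exp (Complex.I * (⟪ξ, x⟫ : ℝ)) := by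
        rw [integral_congr_ae (Filter.Eventually.of_forall key)]
    _ = (1 / (2 * π) ^ 2 : ℂ) * ∫ t in Ioc (0:ℝ) ε, ∫ ξ : EuclideanSpace ℝ (Fin 2),
          (Real.exp (-t * ‖ξ‖^2) : ℂ) *
          (∫ y : EuclideanSpace ℝ (Fin 2), g y * Complex.exp (-Complex.I * (⟪ξ, y⟫ : ℝ))) *
          Complex.exp (Complex.I * (⟪ξ, x⟫ : ℝ)) := by
        have hint : Integrable (Function.uncurry fun (ξ : EuclideanSpace ℝ (Fin 2)) (t : ℝ) =>
            (Real.exp (-t * ‖ξ‖^2) : ℂ) *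
            (∫ y : EuclideanSpace ℝ (Fin 2), g y * Complex.exp (-Complex.I * (⟪ξ, y⟫ : ℝ))) *
            Complex.exp (Complex.I * (⟪ξ, x⟫ : ℝ)))
            ((volume : Measure (EuclideanSpace ℝ (Fin 2))).prod
              (volume.restrict (Ioc (0:ℝ) ε))) := by
          have hdom : Integrable (fun p : (EuclideanSpace ℝ (Fin 2)) × ℝ =>
              ‖∫ y : EuclideanSpace ℝ (Fin 2), g y * Complex.exp (-Complex.I * (⟪p.1, y⟫ : ℝ))‖ * 1)
              ((volume : Measure (EuclideanSpace ℝ (Fin 2))).prod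
                (volume.restrict (Ioc (0:ℝ) ε))) :=
            gh_int.norm.mul_prod (integrable_const 1)
          have hmeas : AEStronglyMeasurable (Function.uncurry fun (ξ : EuclideanSpace ℝ (Fin 2)) (t : ℝ) =>
              (Real.exp (-t * ‖ξ‖^2) : ℂ) *
              (∫ y : EuclideanSpace ℝ (Fin 2), g y * Complex.exp (-Complex.I * (⟪ξ, y⟫ : ℝ))) *
              Complex.exp (Complex.I * (⟪ξ, x⟫ : ℝ)))
              ((volume : Measure (EuclideanSpace ℝ (Fin 2))).prod
                (volume.restrict (Ioc (0:ℝ) ε))) := by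
            apply Continuous.aestronglyMeasurable
            have c1 : Continuous fun p : (EuclideanSpace ℝ (Fin 2)) × ℝ =>
                (Real.exp (-p.2 * ‖p.1‖^2) : ℂ) :=
              Complex.continuous_ofReal.comp (Real.continuous_exp.comp
                ((continuous_snd.neg).mul ((continuous_fst.norm).pow 2)))
            have c2 : Continuous fun p : (EuclideanSpace ℝ (Fin 2)) × ℝ =>
                (∫ y : EuclideanSpace ℝ (Fin 2), g y * Complex.exp (-Complex.I * (⟪p.1, y⟫ : ℝ))) :=
              gh_cont.comp continuous_fst
            have c3 : Continuous fun p : (EuclideanSpace ℝ (Fin 2)) × ℝ =>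
                Complex.exp (Complex.I * ((⟪p.1, x⟫ : ℝ) : ℂ)) :=
              Complex.continuous_exp.comp (continuous_const.mul
                (Complex.continuous_ofReal.comp (Continuous.inner continuous_fst continuous_const)))
            exact (c1.mul c2).mul c3
          have hnull : ((volume : Measure (EuclideanSpace ℝ (Fin 2))).prod
              (volume.restrict (Ioc (0:ℝ) ε)))
              {p : (EuclideanSpace ℝ (Fin 2)) × ℝ | ¬ (0:ℝ) ≤ p.2} = 0 := by
            have hsub : {p : (EuclideanSpace ℝ (Fin 2)) × ℝ | ¬ (0:ℝ) ≤ p.2} ⊆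
                (univ : Set (EuclideanSpace ℝ (Fin 2))) ×ˢ (Iio (0:ℝ)) := by
              intro p hp
              exact ⟨mem_univ _, by simpa using not_le.1 hp⟩
            refine measure_mono_null hsub ?_
            rw [Measure.prod_prod]
            have hz : (volume.restrict (Ioc (0:ℝ) ε)) (Iio 0) = 0 := by
              rw [Measure.restrict_apply measurableSet_Iio]
              rw [show Iio (0:ℝ) ∩ Ioc 0 ε = ∅ from by
                ext u
                simp only [mem_inter_iff, mem_Iio, mem_Ioc, mem_empty_iff_false, iff_false, not_and]
                rintro h1 h2
                intro
                linarith]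
              exact measure_empty
            rw [hz, mul_zero]
          have hmem : ∀ᵐ p : (EuclideanSpace ℝ (Fin 2)) × ℝ
              ∂((volume : Measure (EuclideanSpace ℝ (Fin 2))).prod
                (volume.restrict (Ioc (0:ℝ) ε))), (0:ℝ) ≤ p.2 := by
            rw [ae_iff]
            exact hnull
          refine hdom.mono' hmeas ?_
          filter_upwards [hmem] with p hp
          have h1 : ‖(Real.exp (-p.2 * ‖p.1‖^2) : ℂ)‖ ≤ 1 := by
            rw [Complex.norm_real, Real.norm_eq_abs, abs_of_nonneg (Real.exp_pos _).le]
            refine Real.exp_le_one_iff.2 ?_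
            have := mul_nonneg hp (sq_nonneg ‖p.1‖)
            linarith
          have h2 : ‖Complex.exp (Complex.I * ((⟪p.1, x⟫ : ℝ) : ℂ))‖ = 1 := by
            simp [Complex.norm_exp]
          calc ‖Function.uncurry (fun (ξ : EuclideanSpace ℝ (Fin 2)) (t : ℝ) =>
                (Real.exp (-t * ‖ξ‖^2) : ℂ) *
                (∫ y : EuclideanSpace ℝ (Fin 2), g y * Complex.exp (-Complex.I * (⟪ξ, y⟫ : ℝ))) *
                Complex.exp (Complex.I * (⟪ξ, x⟫ : ℝ))) p‖
              = ‖(Real.exp (-p.2 * ‖p.1‖^2) : ℂ)‖ *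
                ‖∫ y : EuclideanSpace ℝ (Fin 2), g y * Complex.exp (-Complex.I * (⟪p.1, y⟫ : ℝ))‖ *
                ‖Complex.exp (Complex.I * ((⟪p.1, x⟫ : ℝ) : ℂ))‖ := by
                  rw [Function.uncurry]
                  rw [norm_mul, norm_mul]
            _ ≤ 1 * ‖∫ y : EuclideanSpace ℝ (Fin 2), g y * Complex.exp (-Complex.I * (⟪p.1, y⟫ : ℝ))‖ * 1 := by
                  rw [h2]
                  gcongr

            _ = ‖∫ y : EuclideanSpace ℝ (Fin 2), g y * Complex.exp (-Complex.I * (⟪p.1, y⟫ : ℝ))‖ * 1 := by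
                  ring
        rw [integral_integral_swap hint]
    _ = ∫ t in Ioc (0:ℝ) ε, ∫ y : EuclideanSpace ℝ (Fin 2),
          (((4 * π * t)⁻¹ * Real.exp (-‖x - y‖ ^ 2 / (4 * t)) : ℝ) : ℂ) * g y := by
        rw [← integral_const_mul]
        refine setIntegral_congr_fun measurableSet_Ioc (fun t ht => ?_)
        have ht0 : 0 < t := ht.1
        have htne : (t:ℝ) ≠ 0 := ne_of_gt ht0
        have step1 : ∀ ξ : EuclideanSpace ℝ (Fin 2),
            (Real.exp (-t * ‖ξ‖^2) : ℂ) *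
            (∫ y : EuclideanSpace ℝ (Fin 2), g y * Complex.exp (-Complex.I * (⟪ξ, y⟫ : ℝ))) *
            Complex.exp (Complex.I * (⟪ξ, x⟫ : ℝ))
            = ∫ y : EuclideanSpace ℝ (Fin 2),
                g y * Complex.exp (-(t:ℂ) * ‖ξ‖^2 + Complex.I * ((⟪x - y, ξ⟫ : ℝ) : ℂ)) := by
          intro ξ
          rw [← integral_const_mul, ← integral_mul_const]
          refine integral_congr_ae (Filter.Eventually.of_forall fun y => ?_)
          beta_reduce
          have hi : (⟪x - y, ξ⟫ : ℝ) = ⟪ξ, x⟫ - ⟪ξ, y⟫ := by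
            rw [inner_sub_left, real_inner_comm x ξ, real_inner_comm y ξ]
          rw [hi]
          rw [show (-(t:ℂ) * ‖ξ‖^2 + Complex.I * (((⟪ξ, x⟫ : ℝ) - (⟪ξ, y⟫ : ℝ) : ℝ) : ℂ))
              = ((-t * ‖ξ‖^2 : ℝ) : ℂ) + ((-Complex.I * ((⟪ξ, y⟫ : ℝ) : ℂ)) +
                Complex.I * ((⟪ξ, x⟫ : ℝ) : ℂ)) from by push_cast; ring]
          rw [Complex.exp_add, Complex.exp_add, Complex.ofReal_exp]
          ring
        have hint2 : Integrable (Function.uncurry fun (ξ : EuclideanSpace ℝ (Fin 2))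
            (y : EuclideanSpace ℝ (Fin 2)) =>
            g y * Complex.exp (-(t:ℂ) * ‖ξ‖^2 + Complex.I * ((⟪x - y, ξ⟫ : ℝ) : ℂ)))
            ((volume : Measure (EuclideanSpace ℝ (Fin 2))).prod volume) := by
          have hdom : Integrable (fun p : (EuclideanSpace ℝ (Fin 2)) × (EuclideanSpace ℝ (Fin 2)) =>
              Real.exp (-t * ‖p.1‖^2) * ‖g p.2‖)
              ((volume : Measure (EuclideanSpace ℝ (Fin 2))).prod volume) :=
            (aux_gauss_integrable ht0).mul_prod (g.integrable (μ := volume)).norm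
          have hmeas : AEStronglyMeasurable (Function.uncurry fun (ξ : EuclideanSpace ℝ (Fin 2))
              (y : EuclideanSpace ℝ (Fin 2)) =>
              g y * Complex.exp (-(t:ℂ) * ‖ξ‖^2 + Complex.I * ((⟪x - y, ξ⟫ : ℝ) : ℂ)))
              ((volume : Measure (EuclideanSpace ℝ (Fin 2))).prod volume) := by
            apply Continuous.aestronglyMeasurable
            have c1 : Continuous fun p : (EuclideanSpace ℝ (Fin 2)) × (EuclideanSpace ℝ (Fin 2)) =>
                (g p.2 : ℂ) := g.continuous.comp continuous_snd
            have c2 : Continuous fun p : (EuclideanSpace ℝ (Fin 2)) × (EuclideanSpace ℝ (Fin 2)) =>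
                Complex.exp (-(t:ℂ) * ‖p.1‖^2 + Complex.I * ((⟪x - p.2, p.1⟫ : ℝ) : ℂ)) := by
              refine Complex.continuous_exp.comp ?_
              refine Continuous.add ?_ ?_
              · exact (continuous_const.mul ((Complex.continuous_ofReal.comp
                  continuous_fst.norm).pow 2))
              · exact continuous_const.mul (Complex.continuous_ofReal.comp
                  (Continuous.inner (continuous_const.sub continuous_snd) continuous_fst))
            exact c1.mul c2
          refine hdom.mono' hmeas ?_
          refine Filter.Eventually.of_forall fun p => ?_
          rw [Function.uncurry]
          rw [norm_mul]
          have h2 : ‖Complex.exp (-(t:ℂ) * ‖p.1‖^2 + Complex.I * ((⟪x - p.2, p.1⟫ : ℝ) : ℂ))‖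
              = Real.exp (-t * ‖p.1‖^2) := by
            rw [Complex.norm_exp]
            congr 1
            simp [← Complex.ofReal_pow]
          rw [h2]
          exact le_of_eq (mul_comm _ _)
        rw [integral_congr_ae (Filter.Eventually.of_forall step1),
          integral_integral_swap hint2, ← integral_const_mul]
        refine integral_congr_ae (Filter.Eventually.of_forall fun y => ?_)
        beta_reduce
        rw [integral_const_mul, aux_gauss ht0 (x - y)]
        push_cast
        have hπ : (π : ℝ) ≠ 0 := ne_of_gt Real.pi_pos
        have hπc : (π : ℂ) ≠ 0 := by exact_mod_cast hπ
        have htc : (t : ℂ) ≠ 0 := by exact_mod_cast htne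
        field_simp
        ring
end
end
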